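/- The Lie subalgebra s of sl(n+2,ℝ) consisting of matrices [[a, h·Vᵀ, 0],[f·U, C, h·U],[0, f·Vᵀ, e]] with a + tr C + e = 0, C·U = ((a+e)/2)·U, Vᵀ·C = ((a+e)/2)·Vᵀ (for fixed U, V ∈ ℝⁿ with ⟨V,U⟩ = 1) has dimension n² − 2n + 4 as a real vector space. -/

import Mathlib

open Matrix

/-- The block matrix `[[a, h·Vᵀ, 0],[f·U, C, h·U],[0, f·Vᵀ, e]]`. -/
def clBlock (n : ℕ) (a e f h : ℝ) (C : Matrix (Fin n) (Fin n) ℝ)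
    (U V : Fin n → ℝ) :
    Matrix (Fin 1 ⊕ Fin n ⊕ Fin 1) (Fin 1 ⊕ Fin n ⊕ Fin 1) ℝ :=
  Matrix.of fun i j =>
    match i, j with
    | .inl _, .inl _ => a
    | .inl _, .inr (.inl j) => h * V j
    | .inl _, .inr (.inr _) => 0
    | .inr (.inl i), .inl _ => f * U i
    | .inr (.inl i), .inr (.inl j) => C i j
    | .inr (.inl i), .inr (.inr _) => h * U i
    | .inr (.inr _), .inl _ => 0
    | .inr (.inr _), .inr (.inl j) => f * V j
    | .inr (.inr _), .inr (.inr _) => e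

lemma clBlock_add (n : ℕ) (a e f h a' e' f' h' : ℝ)
    (C C' : Matrix (Fin n) (Fin n) ℝ) (U V : Fin n → ℝ) :
    clBlock n a e f h C U V + clBlock n a' e' f' h' C' U V
      = clBlock n (a + a') (e + e') (f + f') (h + h') (C + C') U V := by
  ext i j
  rcases i with i | i | i <;> rcases j with j | j | j <;>
    simp [clBlock, Matrix.add_apply] <;> ring

lemma clBlock_smul (n : ℕ) (c a e f h : ℝ) (C : Matrix (Fin n) (Fin n) ℝ)
    (U V : Fin n → ℝ) :
    c • clBlock n a e f h C U V
      = clBlock n (c * a) (c * e) (c * f) (c * h) (c • C) U V := by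
  ext i j
  rcases i with i | i | i <;> rcases j with j | j | j <;>
    simp [clBlock, Matrix.smul_apply] <;> ring

/-- The symmetry algebra `s`, as a subspace of the space of
`(n+2)×(n+2)` matrices. -/
def clSymmetrySubmodule (n : ℕ) (U V : Fin n → ℝ) :
    Submodule ℝ (Matrix (Fin 1 ⊕ Fin n ⊕ Fin 1) (Fin 1 ⊕ Fin n ⊕ Fin 1) ℝ) where
  carrier := {M | ∃ (a e f h : ℝ) (C : Matrix (Fin n) (Fin n) ℝ),
    a + Matrix.trace C + e = 0 ∧
    C.mulVec U = ((a + e) / 2) • U ∧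
    V ᵥ* C = ((a + e) / 2) • V ∧
    M = clBlock n a e f h C U V}
  add_mem' := by
    rintro M N ⟨a, e, f, h, C, h1, h2, h3, rfl⟩ ⟨a', e', f', h', C', h1', h2', h3', rfl⟩
    refine ⟨a + a', e + e', f + f', h + h', C + C', ?_, ?_, ?_,
      clBlock_add n a e f h a' e' f' h' C C' U V⟩
    · rw [Matrix.trace_add]; linarith
    · rw [Matrix.add_mulVec, h2, h2']
      ext i; simp [Pi.smul_apply]; ring
    · rw [Matrix.vecMul_add, h3, h3']
      ext i; simp [Pi.smul_apply]; ring
  zero_mem' := by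
    refine ⟨0, 0, 0, 0, 0, by simp, by simp, by simp, ?_⟩
    ext i j
    rcases i with i | i | i <;> rcases j with j | j | j <;> simp [clBlock]
  smul_mem' := by
    rintro c M ⟨a, e, f, h, C, h1, h2, h3, rfl⟩
    refine ⟨c * a, c * e, c * f, c * h, c • C, ?_, ?_, ?_,
      clBlock_smul n c a e f h C U V⟩
    · rw [Matrix.trace_smul]; simp only [smul_eq_mul]; linear_combination c * h1
    · rw [Matrix.smul_mulVec, h2]
      ext i; simp [Pi.smul_apply]; ring
    · have hs : V ᵥ* (c • C) = c • (V ᵥ* C) := by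
        ext i
        simp [Matrix.vecMul, dotProduct, Finset.mul_sum, mul_left_comm]
      rw [hs, h3]
      ext i; simp [Pi.smul_apply]; ring

section Aux
variable (n : ℕ) (U V : Fin n → ℝ)

lemma vecMul_smul' (c : ℝ) (M : Matrix (Fin n) (Fin n) ℝ) :
    V ᵥ* (c • M) = c • (V ᵥ* M) := by
  ext i
  simp [Matrix.vecMul, dotProduct, Finset.mul_sum, mul_left_comm]

noncomputable def psiMap : Matrix (Fin n) (Fin n) ℝ →ₗ[ℝ] (Fin n → ℝ) × (Fin n → ℝ) where
  toFun M := (M *ᵥ U, V ᵥ* M)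
  map_add' A B := by
    refine Prod.ext ?_ ?_ <;> simp [Matrix.add_mulVec, Matrix.vecMul_add]
  map_smul' c A := by
    have : V ᵥ* (c • A) = c • (V ᵥ* A) := by
      ext i; simp [Matrix.vecMul, dotProduct, Finset.mul_sum, mul_left_comm]
    refine Prod.ext ?_ ?_ <;> simp [Matrix.smul_mulVec, this]

noncomputable def phiMap : ((Fin n → ℝ) × (Fin n → ℝ)) →ₗ[ℝ] ℝ where
  toFun p := V ⬝ᵥ p.1 - p.2 ⬝ᵥ U
  map_add' p q := by simp [dotProduct_add, add_dotProduct]; ring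
  map_smul' c p := by simp [dotProduct_smul, smul_dotProduct]; ring

lemma range_psiMap (hUV : V ⬝ᵥ U = 1) :
    LinearMap.range (psiMap n U V) = LinearMap.ker (phiMap n U V) := by
  apply le_antisymm
  · rintro _ ⟨M, rfl⟩
    simp [phiMap, psiMap, LinearMap.mem_ker, Matrix.dotProduct_mulVec]
  · rintro ⟨x, y⟩ hxy
    have hxy' : V ⬝ᵥ x = y ⬝ᵥ U := by
      have := LinearMap.mem_ker.mp hxy
      simp [phiMap] at this
      linarith [this]
    refine ⟨Matrix.of fun i j => x i * V j + U i * y j - (V ⬝ᵥ x) * (U i * V j), ?_⟩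
    refine Prod.ext ?_ ?_
    · ext i
      show (∑ j, (x i * V j + U i * y j - (V ⬝ᵥ x) * (U i * V j)) * U j) = x i
      have hrw : ∀ j ∈ Finset.univ, (x i * V j + U i * y j - (V ⬝ᵥ x) * (U i * V j)) * U j
          = x i * (V j * U j) + U i * (y j * U j) - (V ⬝ᵥ x) * U i * (V j * U j) := by
        intro j _; ring
      rw [Finset.sum_congr rfl hrw, Finset.sum_sub_distrib, Finset.sum_add_distrib,
        ← Finset.mul_sum, ← Finset.mul_sum, ← Finset.mul_sum]
      have h1 : (∑ j, V j * U j) = 1 := hUV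
      have h2 : (∑ j, y j * U j) = V ⬝ᵥ x := hxy'.symm
      rw [h1, h2]; ring
    · ext j
      show (∑ i, V i * (x i * V j + U i * y j - (V ⬝ᵥ x) * (U i * V j))) = y j
      have hrw : ∀ i ∈ Finset.univ, V i * (x i * V j + U i * y j - (V ⬝ᵥ x) * (U i * V j))
          = (V i * x i) * V j + (V i * U i) * y j - (V ⬝ᵥ x) * ((V i * U i) * V j) := by
        intro i _; ring
      rw [Finset.sum_congr rfl hrw, Finset.sum_sub_distrib, Finset.sum_add_distrib,
        ← Finset.sum_mul, ← Finset.sum_mul, ← Finset.mul_sum, ← Finset.sum_mul]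
      have h1 : (∑ i, V i * U i) = 1 := hUV
      have h2 : (∑ i, V i * x i) = V ⬝ᵥ x := rfl
      rw [h1, h2]; ring

lemma finrank_ker_psiMap (hUV : V ⬝ᵥ U = 1) :
    Module.finrank ℝ (LinearMap.ker (psiMap n U V)) + 2 * n = n * n + 1 := by
  have h1 := LinearMap.finrank_range_add_finrank_ker (psiMap n U V)
  have h2 := LinearMap.finrank_range_add_finrank_ker (phiMap n U V)
  have hsurj : LinearMap.range (phiMap n U V) = ⊤ := by
    rw [LinearMap.range_eq_top]
    intro t
    refine ⟨(t • U, 0), ?_⟩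
    simp [phiMap, dotProduct_smul, hUV]
  rw [range_psiMap n U V hUV] at h1
  rw [hsurj] at h2
  simp [Module.finrank_prod, Module.finrank_self, Module.finrank_pi,
    Module.finrank_matrix, finrank_top, Fintype.card_fin] at h1 h2
  omega

noncomputable def lamOf (D : Matrix (Fin n) (Fin n) ℝ) : ℝ :=
  -(Matrix.trace D) / (n + 2)

noncomputable def bigPhi : (ℝ × ℝ × ℝ × (LinearMap.ker (psiMap n U V))) →ₗ[ℝ]
    Matrix (Fin 1 ⊕ Fin n ⊕ Fin 1) (Fin 1 ⊕ Fin n ⊕ Fin 1) ℝ where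
  toFun p := clBlock n p.1 (2 * lamOf n (p.2.2.2 : Matrix (Fin n) (Fin n) ℝ) - p.1)
      p.2.1 p.2.2.1
      (lamOf n (p.2.2.2 : Matrix (Fin n) (Fin n) ℝ) • (1 : Matrix (Fin n) (Fin n) ℝ)
        + (p.2.2.2 : Matrix (Fin n) (Fin n) ℝ)) U V
  map_add' p q := by
    rcases p with ⟨a, f, h, D⟩; rcases q with ⟨a', f', h', D'⟩
    rw [clBlock_add]
    have hl : lamOf n ((D : Matrix (Fin n) (Fin n) ℝ) + (D' : Matrix (Fin n) (Fin n) ℝ))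
        = lamOf n (D : Matrix (Fin n) (Fin n) ℝ) + lamOf n (D' : Matrix (Fin n) (Fin n) ℝ) := by
      simp only [lamOf, Matrix.trace_add]; ring
    have he : 2 * (lamOf n (D : Matrix (Fin n) (Fin n) ℝ)
          + lamOf n (D' : Matrix (Fin n) (Fin n) ℝ)) - (a + a')
        = (2 * lamOf n (D : Matrix (Fin n) (Fin n) ℝ) - a)
          + (2 * lamOf n (D' : Matrix (Fin n) (Fin n) ℝ) - a') := by ring
    have hC : (lamOf n (D : Matrix (Fin n) (Fin n) ℝ)
          + lamOf n (D' : Matrix (Fin n) (Fin n) ℝ)) • (1 : Matrix (Fin n) (Fin n) ℝ)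
          + ((D : Matrix (Fin n) (Fin n) ℝ) + (D' : Matrix (Fin n) (Fin n) ℝ))
        = (lamOf n (D : Matrix (Fin n) (Fin n) ℝ) • 1 + (D : Matrix (Fin n) (Fin n) ℝ))
          + (lamOf n (D' : Matrix (Fin n) (Fin n) ℝ) • 1 + (D' : Matrix (Fin n) (Fin n) ℝ)) := by
      rw [add_smul]; abel
    simp only [Prod.mk_add_mk, Submodule.coe_add]
    rw [hl, he, hC]
  map_smul' c p := by
    rcases p with ⟨a, f, h, D⟩
    rw [RingHom.id_apply, clBlock_smul]
    have hl : lamOf n (c • (D : Matrix (Fin n) (Fin n) ℝ))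
        = c * lamOf n (D : Matrix (Fin n) (Fin n) ℝ) := by
      simp only [lamOf, Matrix.trace_smul, smul_eq_mul]; ring
    have he : 2 * (c * lamOf n (D : Matrix (Fin n) (Fin n) ℝ)) - c * a
        = c * (2 * lamOf n (D : Matrix (Fin n) (Fin n) ℝ) - a) := by ring
    have hC : (c * lamOf n (D : Matrix (Fin n) (Fin n) ℝ)) • (1 : Matrix (Fin n) (Fin n) ℝ)
          + c • (D : Matrix (Fin n) (Fin n) ℝ)
        = c • (lamOf n (D : Matrix (Fin n) (Fin n) ℝ) • 1 + (D : Matrix (Fin n) (Fin n) ℝ)) := by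
      rw [smul_add, smul_smul]
    simp only [Prod.smul_mk, Submodule.coe_smul, smul_eq_mul]
    rw [hl, he, hC]

lemma exists_ne_zero_U (hUV : V ⬝ᵥ U = 1) : ∃ i, U i ≠ 0 := by
  by_contra hc; push_neg at hc
  have : U = 0 := funext hc
  rw [this] at hUV; simp at hUV

lemma exists_ne_zero_V (hUV : V ⬝ᵥ U = 1) : ∃ j, V j ≠ 0 := by
  by_contra hc; push_neg at hc
  have : V = 0 := funext hc
  rw [this] at hUV; simp at hUV

lemma bigPhi_inj (hUV : V ⬝ᵥ U = 1) : Function.Injective (bigPhi n U V) := by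
  rw [← LinearMap.ker_eq_bot, LinearMap.ker_eq_bot']
  rintro ⟨a, f, h, D⟩ hp
  obtain ⟨i0, hi0⟩ := exists_ne_zero_U n U V hUV
  obtain ⟨j0, hj0⟩ := exists_ne_zero_V n U V hUV
  have hD2 := LinearMap.mem_ker.mp D.2
  have hDU : (D : Matrix (Fin n) (Fin n) ℝ) *ᵥ U = 0 := congrArg Prod.fst hD2
  have ha : a = 0 := by
    have := congrFun (congrFun hp (Sum.inl 0)) (Sum.inl 0)
    simpa [bigPhi, clBlock] using this
  have hh : h = 0 := by
    have := congrFun (congrFun hp (Sum.inl 0)) (Sum.inr (Sum.inl j0))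
    simp [bigPhi, clBlock] at this
    rcases this with h' | h'
    · exact h'
    · exact absurd h' hj0
  have hf : f = 0 := by
    have := congrFun (congrFun hp (Sum.inr (Sum.inr 0))) (Sum.inr (Sum.inl j0))
    simp [bigPhi, clBlock] at this
    rcases this with h' | h'
    · exact h'
    · exact absurd h' hj0
  have hC : lamOf n (D : Matrix (Fin n) (Fin n) ℝ) • (1 : Matrix (Fin n) (Fin n) ℝ)
      + (D : Matrix (Fin n) (Fin n) ℝ) = 0 := by
    ext i j
    have := congrFun (congrFun hp (Sum.inr (Sum.inl i))) (Sum.inr (Sum.inl j))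
    simpa [bigPhi, clBlock] using this
  have hlam : lamOf n (D : Matrix (Fin n) (Fin n) ℝ) = 0 := by
    have h1 := congrArg (fun M => M *ᵥ U) hC
    simp only [Matrix.add_mulVec, Matrix.smul_mulVec, Matrix.one_mulVec, hDU,
      add_zero, Matrix.zero_mulVec] at h1
    have h2 := congrFun h1 i0
    simp only [Pi.smul_apply, Pi.zero_apply, smul_eq_mul] at h2
    rcases mul_eq_zero.mp h2 with h' | h'
    · exact h'
    · exact absurd h' hi0
  have hD : D = 0 := by
    apply Subtype.ext
    have := hC
    rw [hlam] at this
    simpa using this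
  rw [ha, hf, hh, hD]
  rfl

lemma bigPhi_range (hUV : V ⬝ᵥ U = 1) :
    LinearMap.range (bigPhi n U V) = clSymmetrySubmodule n U V := by
  have hn2 : ((n : ℝ) + 2) ≠ 0 := by positivity
  apply le_antisymm
  · rintro _ ⟨⟨a, f, h, D⟩, rfl⟩
    have hD2 := LinearMap.mem_ker.mp D.2
    have hDU : (D : Matrix (Fin n) (Fin n) ℝ) *ᵥ U = 0 := congrArg Prod.fst hD2
    have hVD : V ᵥ* (D : Matrix (Fin n) (Fin n) ℝ) = 0 := congrArg Prod.snd hD2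
    refine ⟨a, 2 * lamOf n (D : Matrix (Fin n) (Fin n) ℝ) - a, f, h,
      lamOf n (D : Matrix (Fin n) (Fin n) ℝ) • 1 + (D : Matrix (Fin n) (Fin n) ℝ),
      ?_, ?_, ?_, rfl⟩
    · rw [Matrix.trace_add, Matrix.trace_smul, Matrix.trace_one]
      simp only [smul_eq_mul, lamOf, Fintype.card_fin]
      field_simp
      ring
    · rw [Matrix.add_mulVec, Matrix.smul_mulVec, Matrix.one_mulVec, hDU, add_zero]
      have : (a + (2 * lamOf n (D : Matrix (Fin n) (Fin n) ℝ) - a)) / 2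
          = lamOf n (D : Matrix (Fin n) (Fin n) ℝ) := by ring
      rw [this]
    · rw [Matrix.vecMul_add, vecMul_smul' n V _ _, Matrix.vecMul_one, hVD, add_zero]
      have : (a + (2 * lamOf n (D : Matrix (Fin n) (Fin n) ℝ) - a)) / 2
          = lamOf n (D : Matrix (Fin n) (Fin n) ℝ) := by ring
      rw [this]
  · rintro M ⟨a, e, f, h, C, h1, h2, h3, rfl⟩
    set lam : ℝ := (a + e) / 2 with hlamdef
    have hmem : C - lam • (1 : Matrix (Fin n) (Fin n) ℝ) ∈ LinearMap.ker (psiMap n U V) := by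
      rw [LinearMap.mem_ker]
      refine Prod.ext ?_ ?_
      · show (C - lam • (1 : Matrix (Fin n) (Fin n) ℝ)) *ᵥ U = 0
        rw [Matrix.sub_mulVec, Matrix.smul_mulVec, Matrix.one_mulVec, h2]
        simp
      · show V ᵥ* (C - lam • (1 : Matrix (Fin n) (Fin n) ℝ)) = 0
        rw [Matrix.vecMul_sub, vecMul_smul' n V _ _, Matrix.vecMul_one, h3]
        simp
    refine ⟨⟨a, f, h, ⟨C - lam • (1 : Matrix (Fin n) (Fin n) ℝ), hmem⟩⟩, ?_⟩
    have hlam : lamOf n (C - lam • (1 : Matrix (Fin n) (Fin n) ℝ)) = lam := by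
      rw [lamOf, Matrix.trace_sub, Matrix.trace_smul, Matrix.trace_one]
      simp only [smul_eq_mul, Fintype.card_fin]
      have htrC : Matrix.trace C = -(a + e) := by linarith
      rw [htrC, hlamdef]
      field_simp
      ring
    show clBlock n a _ f h _ U V = clBlock n a e f h C U V
    rw [hlam]
    have he : 2 * lam - a = e := by rw [hlamdef]; ring
    have hCC : lam • (1 : Matrix (Fin n) (Fin n) ℝ)
        + (C - lam • (1 : Matrix (Fin n) (Fin n) ℝ)) = C := by abel
    rw [he, hCC]

end Aux


/-- The symmetry algebra of a contact distinguished curve in the flat contact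
Legendrean model has dimension `n² − 2n + 4`. -/
theorem dim_clSymmetryAlgebra (n : ℕ) (U V : Fin n → ℝ) (hUV : V ⬝ᵥ U = 1) :
    (Module.finrank ℝ (clSymmetrySubmodule n U V) : ℤ)
      = (n : ℤ) ^ 2 - 2 * n + 4 := by
  have hker := finrank_ker_psiMap n U V hUV
  have e1 : (ℝ × ℝ × ℝ × (LinearMap.ker (psiMap n U V))) ≃ₗ[ℝ] clSymmetrySubmodule n U V :=
    (LinearEquiv.ofInjective _ (bigPhi_inj n U V hUV)).trans
      (LinearEquiv.ofEq _ _ (bigPhi_range n U V hUV))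
  have hfr : Module.finrank ℝ (clSymmetrySubmodule n U V)
      = 3 + Module.finrank ℝ (LinearMap.ker (psiMap n U V)) := by
    rw [← e1.finrank_eq]
    simp [Module.finrank_prod, Module.finrank_self]
    omega
  rw [hfr]
  have h2 : (Module.finrank ℝ (LinearMap.ker (psiMap n U V)) : ℤ) + 2 * n = n * n + 1 := by
    exact_mod_cast hker
  have h3 : (n : ℤ) ^ 2 = n * n := sq (n : ℤ)
  push_cast
  linarith
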